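/- arXiv:1404.7516 — 4 statements merged into one kernel-verified Lean document; each statement's English description precedes it below -/
import Mathlib

section
/- Let S be a finite type, d ≥ 1 a natural number, ω ∈ ℂ a primitive d-th root of unity, and l : S → Fin d. For each k : ℕ let F_k be the diagonal S×S matrix over ℂ whose (s,s)-entry is ω^(k * l s). Then for every matrix ρ : Matrix S S ℂ, (1/d) • ∑_{k=0}^{d-1} F_k * ρ * (F_k)ᴴ equals the matrix whose (s,s')-entry is ρ s s' if l s = l s' and 0 otherwise. (In words: the uniform mixture of the random-phase operators F_k implements exactly the channel that destroys all coherence between basis states with different values of the leakage function l.) -/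
open Matrix Finset

/-- The uniform mixture of the random-phase operators `F k = diag (ω ^ (k * l s))`
implements exactly the channel destroying all coherence between basis states with
different values of the leakage function `l`. -/
theorem stmt0 (S : Type*) [Fintype S] [DecidableEq S]
    (d : ℕ) (hd : 1 ≤ d) (ω : ℂ) (hω : IsPrimitiveRoot ω d)
    (l : S → Fin d)
    (F : ℕ → Matrix S S ℂ)
    (hF : ∀ k : ℕ, F k = Matrix.diagonal (fun s => ω ^ (k * (l s : ℕ))))
    (ρ : Matrix S S ℂ) :
    (1 / (d : ℂ)) • ∑ k ∈ Finset.range d, F k * ρ * (F k)ᴴ =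
      Matrix.of (fun s s' => if l s = l s' then ρ s s' else 0) := by
  have hd0 : (d : ℂ) ≠ 0 := Nat.cast_ne_zero.mpr (by omega)
  have hω1 : ω ^ d = 1 := hω.pow_eq_one
  have hω0 : ω ≠ 0 := by
    intro h; rw [h, zero_pow (by omega)] at hω1; exact one_ne_zero hω1.symm
  have habs : ‖ω‖ = 1 := Complex.norm_eq_one_of_pow_eq_one hω1 (by omega)
  have hconj : (starRingEnd ℂ) ω = ω⁻¹ := (Complex.inv_eq_conj habs).symm
  ext s s'
  simp only [hF, Matrix.diagonal_conjTranspose, Matrix.smul_apply, Matrix.sum_apply,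
    Matrix.mul_diagonal, Matrix.diagonal_mul, Matrix.of_apply, Pi.star_apply,
    star_pow, RCLike.star_def, hconj, smul_eq_mul, inv_pow]
  have key : ∀ k, ω ^ (k * (l s : ℕ)) * ρ s s' * (ω ^ (k * (l s' : ℕ)))⁻¹ =
      (ω ^ (l s : ℕ) * (ω ^ (l s' : ℕ))⁻¹) ^ k * ρ s s' := by
    intro k
    rw [mul_pow, inv_pow, ← pow_mul, ← pow_mul, mul_comm (l s : ℕ) k,
      mul_comm (l s' : ℕ) k]
    ring
  rw [Finset.sum_congr rfl fun k _ => key k, ← Finset.sum_mul]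
  set ζ : ℂ := ω ^ (l s : ℕ) * (ω ^ (l s' : ℕ))⁻¹ with hζ
  by_cases h : l s = l s'
  · simp only [h, if_pos rfl]
    have : ζ = 1 := by rw [hζ, h, mul_inv_cancel₀ (pow_ne_zero _ hω0)]
    rw [this]
    simp
    field_simp
  · simp only [if_neg h]
    have hζ1 : ζ ≠ 1 := by
      intro hc
      apply h
      have : ω ^ (l s : ℕ) = ω ^ (l s' : ℕ) := by
        field_simp [hζ] at hc
        rw [hζ, mul_inv_eq_one₀ (pow_ne_zero _ hω0)] at hc
        exact hc
      exact Fin.ext (hω.pow_inj (l s).isLt (l s').isLt this)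
    have hζd : ζ ^ d = 1 := by
      rw [hζ, mul_pow, inv_pow, ← pow_mul, ← pow_mul, mul_comm (l s : ℕ) d,
        mul_comm (l s' : ℕ) d, pow_mul, pow_mul, hω1, one_pow, one_pow, inv_one, mul_one]
    rw [geom_sum_eq hζ1, hζd]
    simp
end

section
/- Let C be a ZMod 2-submodule of (Fin n → ZMod 2) with dual C^⊥ = {x | ∀ c ∈ C, x·c = 0}. Assume C^⊥ ≤ C and that every element of C that is not in C^⊥ has odd Hamming weight. Then for all x, y ∈ C with x ∉ C^⊥ and y ∉ C^⊥, if x·y = 0 then x + y ∈ C^⊥. -/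
open Finset

lemma self_dot (n : ℕ) (v : Fin n → ZMod 2) :
    ∑ i, v i * v i = ((Finset.univ.filter (fun i => v i ≠ 0)).card : ZMod 2) := by
  have h1 : ∀ a : ZMod 2, a * a = a := by decide
  have h2 : ∀ a : ZMod 2, a ≠ 0 → a = 1 := by decide
  simp only [h1]
  rw [← Finset.sum_filter_ne_zero]
  rw [Finset.sum_congr rfl (fun i hi => h2 _ (Finset.mem_filter.mp hi).2)]
  simp

lemma odd_cast (m : ℕ) (h : Odd m) : (m : ZMod 2) = 1 := by
  obtain ⟨k, hk⟩ := h
  subst hk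
  have h2 : (2 : ZMod 2) = 0 := rfl
  push_cast
  rw [h2]
  ring

/-- For a dual-containing binary code in which every codeword outside the dual
has odd weight: if `x, y ∈ C \ C^⊥` are orthogonal, then `x + y ∈ C^⊥`. -/
theorem stmt9 (n : ℕ) (C : Submodule (ZMod 2) (Fin n → ZMod 2))
    (hdual : ∀ x : Fin n → ZMod 2, (∀ c ∈ C, ∑ i, x i * c i = 0) → x ∈ C)
    (hodd : ∀ x ∈ C, ¬(∀ c ∈ C, ∑ i, x i * c i = 0) →
      Odd (Finset.univ.filter (fun i => x i ≠ 0)).card) :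
    ∀ x ∈ C, ∀ y ∈ C,
      ¬(∀ c ∈ C, ∑ i, x i * c i = 0) →
      ¬(∀ c ∈ C, ∑ i, y i * c i = 0) →
      (∑ i, x i * y i = 0) →
      (∀ c ∈ C, ∑ i, (x + y) i * c i = 0) := by
  intro x hx y hy hxd hyd hxy
  by_contra h
  push_neg at h
  have hxyC : x + y ∈ C := C.add_mem hx hy
  have hodd' := hodd (x + y) hxyC (by push_neg; exact h)
  have h1 : (((Finset.univ.filter (fun i => (x + y) i ≠ 0)).card : ℕ) : ZMod 2) = 1 :=
    odd_cast _ hodd'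
  have hxx : ∑ i, x i * x i = 1 := by
    rw [self_dot, odd_cast _ (hodd x hx hxd)]
  have hyy : ∑ i, y i * y i = 1 := by
    rw [self_dot, odd_cast _ (hodd y hy hyd)]
  have hchar : ∀ a b : ZMod 2, (a + b) * (a + b) = a * a + b * b + a * b + a * b := by decide
  have hsum : ∑ i, (x + y) i * (x + y) i = 0 := by
    simp only [Pi.add_apply, hchar]
    rw [Finset.sum_add_distrib, Finset.sum_add_distrib, Finset.sum_add_distrib, hxx, hyy, hxy]
    decide
  rw [self_dot, h1] at hsum
  exact one_ne_zero hsum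
end

section
/- Let C be a ZMod 2-submodule of (Fin n → ZMod 2) with dual C^⊥ = {x | ∀ c ∈ C, x·c = 0}. Assume C^⊥ ≤ C and that every element of C that is not in C^⊥ has odd Hamming weight. Then for all x, y ∈ C with x ∉ C^⊥ and y ∉ C^⊥, the dot product satisfies x·y = 1 (in ZMod 2). (In words: any two codewords lying in C \ C^⊥ have odd overlap.) -/
open Finset

lemma selfdot10 {n : ℕ} (v : Fin n → ZMod 2) :
    ∑ i, v i * v i = ((Finset.univ.filter (fun i => v i ≠ 0)).card : ZMod 2) := by
  have h1 : ∀ a : ZMod 2, a * a = a := by decide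
  have h2 : ∀ a : ZMod 2, a ≠ 0 → a = 1 := by decide
  simp_rw [h1]
  rw [← Finset.sum_filter_ne_zero]
  rw [Finset.sum_congr rfl (fun i hi => h2 _ (Finset.mem_filter.mp hi).2),
    Finset.sum_const, nsmul_eq_mul, mul_one]

lemma selfdot_one {n : ℕ} (v : Fin n → ZMod 2)
    (h : Odd (Finset.univ.filter (fun i => v i ≠ 0)).card) :
    ∑ i, v i * v i = 1 := by
  obtain ⟨k, hk⟩ := h
  rw [selfdot10, hk]
  push_cast
  simp [show (2 : ZMod 2) = 0 by decide]

/-- For a dual-containing binary code in which every codeword outside the dual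
has odd weight, any two codewords lying in `C \ C^⊥` have odd overlap, i.e.
their dot product over `F₂` is 1. -/
theorem stmt10 (n : ℕ) (C : Submodule (ZMod 2) (Fin n → ZMod 2))
    (hdual : ∀ x : Fin n → ZMod 2, (∀ c ∈ C, ∑ i, x i * c i = 0) → x ∈ C)
    (hodd : ∀ x ∈ C, ¬(∀ c ∈ C, ∑ i, x i * c i = 0) →
      Odd (Finset.univ.filter (fun i => x i ≠ 0)).card) :
    ∀ x ∈ C, ∀ y ∈ C,
      ¬(∀ c ∈ C, ∑ i, x i * c i = 0) →
      ¬(∀ c ∈ C, ∑ i, y i * c i = 0) →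
      ∑ i, x i * y i = 1 := by
  intro x hx y hy hxd hyd
  have hxx : ∑ i, x i * x i = 1 := selfdot_one x (hodd x hx hxd)
  have hyy : ∑ i, y i * y i = 1 := selfdot_one y (hodd y hy hyd)
  have hsum : x + y ∈ C := C.add_mem hx hy
  by_cases hs : ∀ c ∈ C, ∑ i, (x + y) i * c i = 0
  · have h := hs y hy
    simp only [Pi.add_apply, add_mul, Finset.sum_add_distrib] at h
    rw [hyy] at h
    generalize ∑ i, x i * y i = s at h ⊢
    revert h; revert s; decide
  · have hso : ∑ i, (x + y) i * (x + y) i = 1 := selfdot_one _ (hodd _ hsum hs)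
    exfalso
    simp only [Pi.add_apply, add_mul, mul_add, Finset.sum_add_distrib] at hso
    rw [hxx, hyy] at hso
    have hc : ∑ i, y i * x i = ∑ i, x i * y i := by
      apply Finset.sum_congr rfl; intros; ring
    rw [hc] at hso
    generalize ∑ i, x i * y i = s at hso
    revert hso; revert s; decide
end

section
/- Let C be a ZMod 2-submodule of (Fin n → ZMod 2) with dual C^⊥ = {x | ∀ c ∈ C, x·c = 0}. Assume C^⊥ ≤ C and that every element of C that is not in C^⊥ has odd Hamming weight. Then for all u, v ∈ C, the cardinality of {i | u i = 1 ∧ v i = 1} is odd if and only if u ∉ C^⊥ and v ∉ C^⊥. (In words: the transversal bitwise product of encodings of logical bits x and y is a string of odd weight if and only if x = y = 1; this is the correctness of the transversal Toffoli gate on CSS codes built from dual-containing classical codes.) -/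
open Finset

private lemma oddcast (m : ℕ) : Odd m ↔ (m : ZMod 2) = 1 := by
  rw [Nat.odd_iff, ← ZMod.natCast_mod m 2]
  rcases Nat.mod_two_eq_zero_or_one m with h | h <;> simp [h] <;> decide

private lemma dot_eq (n : ℕ) (x y : Fin n → ZMod 2) :
    (∑ i, x i * y i) = ((Finset.univ.filter (fun i => x i = 1 ∧ y i = 1)).card : ZMod 2) := by
  rw [Finset.card_filter]
  push_cast
  refine Finset.sum_congr rfl fun i _ => ?_
  have h : ∀ a b : ZMod 2, a * b = if a = 1 ∧ b = 1 then 1 else 0 := by decide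
  exact h _ _

private lemma wt_eq (n : ℕ) (x : Fin n → ZMod 2) :
    (∑ i, x i * x i) = ((Finset.univ.filter (fun i => x i ≠ 0)).card : ZMod 2) := by
  rw [dot_eq]
  congr 1
  apply congrArg Finset.card
  apply Finset.filter_congr
  intro i _
  have : ∀ b : ZMod 2, (b = 1 ∧ b = 1) ↔ b ≠ 0 := by decide
  exact this _

/-- Correctness of the transversal Toffoli gate on CSS codes built from
dual-containing classical codes: for `u, v ∈ C`, the bitwise product of `u`
and `v` has odd weight iff both `u` and `v` lie outside the dual `C^⊥`. -/
theorem stmt11 (n : ℕ) (C : Submodule (ZMod 2) (Fin n → ZMod 2))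
    (hdual : ∀ x : Fin n → ZMod 2, (∀ c ∈ C, ∑ i, x i * c i = 0) → x ∈ C)
    (hodd : ∀ x ∈ C, ¬(∀ c ∈ C, ∑ i, x i * c i = 0) →
      Odd (Finset.univ.filter (fun i => x i ≠ 0)).card) :
    ∀ u ∈ C, ∀ v ∈ C,
      (Odd (Finset.univ.filter (fun i => u i = 1 ∧ v i = 1)).card ↔
        (¬(∀ c ∈ C, ∑ i, u i * c i = 0) ∧ ¬(∀ c ∈ C, ∑ i, v i * c i = 0))) := by
  intro u hu v hv
  have key : ∀ x ∈ C, (∑ i, x i * x i) = 0 → (∀ c ∈ C, ∑ i, x i * c i = 0) := by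
    intro x hx hxx
    by_contra h
    have h1 := (oddcast _).mp (hodd x hx h)
    rw [wt_eq] at hxx
    rw [hxx] at h1
    exact (by decide : (0 : ZMod 2) ≠ 1) h1
  constructor
  · intro hoc
    have h1 : (∑ i, u i * v i) = 1 := by rw [dot_eq]; exact (oddcast _).mp hoc
    constructor
    · intro hd
      rw [hd v hv] at h1
      exact (by decide : (0 : ZMod 2) ≠ 1) h1
    · intro hd
      have h2 : (∑ i, v i * u i) = 1 := by
        rw [← h1]; exact Finset.sum_congr rfl fun i _ => mul_comm _ _
      rw [hd u hu] at h2
      exact (by decide : (0 : ZMod 2) ≠ 1) h2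
  · rintro ⟨hu', hv'⟩
    have huu : (∑ i, u i * u i) = 1 := by
      rw [wt_eq]; exact (oddcast _).mp (hodd u hu hu')
    have hvv : (∑ i, v i * v i) = 1 := by
      rw [wt_eq]; exact (oddcast _).mp (hodd v hv hv')
    have hsum : u + v ∈ C := C.add_mem hu hv
    have hzero : (∑ i, (u + v) i * (u + v) i) = 0 := by
      have hpt : ∀ a b : ZMod 2, (a + b) * (a + b) = a * a + b * b := by decide
      calc (∑ i, (u + v) i * (u + v) i) = ∑ i, (u i * u i + v i * v i) := by
            refine Finset.sum_congr rfl fun i _ => ?_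
            simp only [Pi.add_apply]; exact hpt _ _
        _ = (∑ i, u i * u i) + ∑ i, v i * v i := Finset.sum_add_distrib
        _ = 0 := by rw [huu, hvv]; decide
    have hd := key (u + v) hsum hzero v hv
    have hexp : (∑ i, (u + v) i * v i) = (∑ i, u i * v i) + ∑ i, v i * v i := by
      rw [← Finset.sum_add_distrib]
      refine Finset.sum_congr rfl fun i _ => ?_
      simp only [Pi.add_apply]; ring
    rw [hexp, hvv] at hd
    have h1 : (∑ i, u i * v i) = 1 := by
      have : ∀ a : ZMod 2, a + 1 = 0 → a = 1 := by decide
      exact this _ hd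
    rw [dot_eq] at h1
    exact (oddcast _).mpr h1
end
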